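/- The rank weight on M₂(𝔽_p) is not egalitarian: there is no constant Γ ∈ ℝ such that for every nonzero x ∈ M₂(𝔽_p), the sum of rank(y) over all y in the left ideal M₂(𝔽_p)·x equals Γ · |M₂(𝔽_p)·x|. Specifically, for the idempotent a = [[0,0],[0,1]], the average rank over the minimal left ideal M₂(𝔽_p)·a is (p²−1)/p², while the average rank over the full ring M₂(𝔽_p) (the ideal generated by the identity) is (2p⁴−p³−p²+p−1)/p⁴, and these two values are never equal for any prime p. -/
import Mathlib

section Aux

variable {K : Type*} [Field K]

theorem myrank_eq_zero_iff (A : Matrix (Fin 2) (Fin 2) K) : A.rank = 0 ↔ A = 0 := by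
  constructor
  · intro h
    rw [Matrix.rank, Submodule.finrank_eq_zero, LinearMap.range_eq_bot] at h
    ext i j
    have := congrFun (congrArg (fun f => f (Pi.single j 1)) h) i
    simpa [Matrix.mulVecLin_apply, Matrix.mulVec_single] using this
  · rintro rfl; exact Matrix.rank_zero

theorem myrank_isUnit (A : Matrix (Fin 2) (Fin 2) K) (h : A.rank = 2) : IsUnit A := by
  rw [← Matrix.mulVec_surjective_iff_isUnit, ← Matrix.coe_mulVecLin, ← LinearMap.range_eq_top]
  apply Submodule.eq_top_of_finrank_eq
  rw [← Matrix.rank, h]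
  simp [Module.finrank_fintype_fun_eq_card]

open scoped Classical in
theorem myrank_formula (A : Matrix (Fin 2) (Fin 2) K) :
    A.rank = (if A = 0 then 0 else 1) + (if IsUnit A.det then 1 else 0) := by
  by_cases hd : IsUnit A.det
  · have hu : IsUnit A := (Matrix.isUnit_iff_isUnit_det A).mpr hd
    have hA0 : A ≠ 0 := by
      rintro rfl
      exact hd.ne_zero (by simp)
    rw [Matrix.rank_of_isUnit A hu]
    simp [hA0, hd, hd.ne_zero]
  · by_cases hA : A = 0
    · subst hA; simp [Matrix.rank_zero, hd]
    · have h1 : A.rank ≠ 0 := by rw [Ne, myrank_eq_zero_iff]; exact hA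
      have h2 : A.rank ≠ 2 := fun h => hd ((Matrix.isUnit_iff_isUnit_det A).mp (myrank_isUnit A h))
      have h3 : A.rank ≤ 2 := by simpa using A.rank_le_card_width
      interval_cases h : A.rank <;> simp_all

theorem mem_span_e22 (y : Matrix (Fin 2) (Fin 2) K) :
    y ∈ Submodule.span (Matrix (Fin 2) (Fin 2) K) {(!![0,0;0,1] : Matrix (Fin 2) (Fin 2) K)} ↔
      y 0 0 = 0 ∧ y 1 0 = 0 := by
  rw [Submodule.mem_span_singleton]
  constructor
  · rintro ⟨r, rfl⟩
    constructor <;> simp [smul_eq_mul, Matrix.mul_apply, Fin.sum_univ_two]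
  · rintro ⟨h0, h1⟩
    refine ⟨y, ?_⟩
    rw [smul_eq_mul]
    ext i j
    fin_cases i <;> fin_cases j <;>
      simp [Matrix.mul_apply, Fin.sum_univ_two, h0, h1]

end Aux

/-- The rank weight on M₂(𝔽_p) is not egalitarian: no constant Γ works for all
left principal ideals; the average rank over the minimal left ideal generated by
the idempotent [[0,0],[0,1]] is (p²−1)/p², while the average over the whole ring
is (2p⁴−p³−p²+p−1)/p⁴, and these differ. -/
theorem stmt_7 (p : ℕ) [Fact p.Prime] :
    (¬ ∃ Γ : ℝ, ∀ x : Matrix (Fin 2) (Fin 2) (ZMod p), x ≠ 0 →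
        (∑ᶠ y : ↥(Submodule.span (Matrix (Fin 2) (Fin 2) (ZMod p)) {x}),
            ((y : Matrix (Fin 2) (Fin 2) (ZMod p)).rank : ℝ)) =
          Γ * Nat.card (Submodule.span (Matrix (Fin 2) (Fin 2) (ZMod p)) {x})) ∧
    (∑ᶠ y : ↥(Submodule.span (Matrix (Fin 2) (Fin 2) (ZMod p))
          {(!![0, 0; 0, 1] : Matrix (Fin 2) (Fin 2) (ZMod p))}),
        ((y : Matrix (Fin 2) (Fin 2) (ZMod p)).rank : ℝ)) /
      Nat.card (Submodule.span (Matrix (Fin 2) (Fin 2) (ZMod p))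
          {(!![0, 0; 0, 1] : Matrix (Fin 2) (Fin 2) (ZMod p))}) =
      ((p : ℝ) ^ 2 - 1) / (p : ℝ) ^ 2 ∧
    (∑ᶠ A : Matrix (Fin 2) (Fin 2) (ZMod p), ((A.rank : ℝ))) /
        Nat.card (Matrix (Fin 2) (Fin 2) (ZMod p)) =
      (2 * (p : ℝ) ^ 4 - (p : ℝ) ^ 3 - (p : ℝ) ^ 2 + (p : ℝ) - 1) / (p : ℝ) ^ 4 ∧
    ((p : ℝ) ^ 2 - 1) / (p : ℝ) ^ 2 ≠
      (2 * (p : ℝ) ^ 4 - (p : ℝ) ^ 3 - (p : ℝ) ^ 2 + (p : ℝ) - 1) / (p : ℝ) ^ 4 := by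
  classical
  set M := Matrix (Fin 2) (Fin 2) (ZMod p) with hM
  set a : M := !![0, 0; 0, 1] with ha
  set S := Submodule.span M {a} with hS
  have hp : p.Prime := Fact.out
  have hp2 : 2 ≤ p := hp.two_le
  have hpR : (2 : ℝ) ≤ (p : ℝ) := by exact_mod_cast hp2
  have hp0 : (p : ℝ) ≠ 0 := by linarith
  -- cardinality of the full matrix ring
  have hcardM : (Nat.card M : ℝ) = (p : ℝ) ^ 4 := by
    rw [Nat.card_eq_fintype_card]
    have : Fintype.card M = p ^ 4 := by
      show Fintype.card (Fin 2 → Fin 2 → ZMod p) = p ^ 4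
      simp [ZMod.card]
      ring
    rw [this]; push_cast; ring
  -- cardinality of matrices with unit determinant
  have hGL : Nat.card {A : M // IsUnit A.det} = (p ^ 2 - 1) * (p ^ 2 - p) := by
    have e : {A : M // IsUnit A.det} ≃ GL (Fin 2) (ZMod p) :=
      { toFun := fun A => ((Matrix.isUnit_iff_isUnit_det A.1).mpr A.2).unit
        invFun := fun u => ⟨u, (Matrix.isUnit_iff_isUnit_det _).mp u.isUnit⟩
        left_inv := fun A => Subtype.ext ((Matrix.isUnit_iff_isUnit_det A.1).mpr A.2).unit_spec
        right_inv := fun u => Units.ext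
          ((Matrix.isUnit_iff_isUnit_det (u : Matrix (Fin 2) (Fin 2) (ZMod p))).mpr
            ((Matrix.isUnit_iff_isUnit_det _).mp u.isUnit)).unit_spec }
    rw [Nat.card_congr e, Matrix.card_GL_field]
    simp [Fin.prod_univ_two, ZMod.card, pow_zero, pow_one]
  -- the sum of ranks over the full ring
  have hrank : ∀ A : M, (A.rank : ℝ) =
      (if A = 0 then 0 else 1) + (if IsUnit A.det then 1 else 0) := by
    intro A
    rw [myrank_formula A]
    split_ifs <;> norm_num
  have hsumAll : (∑ᶠ A : M, ((A.rank : ℝ))) =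
      2 * (p : ℝ) ^ 4 - (p : ℝ) ^ 3 - (p : ℝ) ^ 2 + (p : ℝ) - 1 := by
    rw [finsum_eq_sum_of_fintype]
    rw [Finset.sum_congr rfl fun A _ => hrank A, Finset.sum_add_distrib]
    have e1 : ∑ A : M, (if A = 0 then (0:ℝ) else 1) = (p : ℝ) ^ 4 - 1 := by
      have : ∀ A : M, (if A = 0 then (0:ℝ) else 1) = 1 - (if A = 0 then (1:ℝ) else 0) := by
        intro A; split_ifs <;> ring
      rw [Finset.sum_congr rfl fun A _ => this A, Finset.sum_sub_distrib,
        Finset.sum_const, Finset.sum_ite_eq' Finset.univ (0 : M) (fun _ => (1:ℝ))]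
      simp only [Finset.mem_univ, if_true, nsmul_eq_mul, mul_one]
      rw [Finset.card_univ, ← Nat.card_eq_fintype_card, hcardM]
    have e2 : ∑ A : M, (if IsUnit A.det then (1:ℝ) else 0) =
        ((p ^ 2 - 1) * (p ^ 2 - p) : ℕ) := by
      rw [Finset.sum_boole]
      norm_cast
      rw [← Fintype.card_subtype, ← Nat.card_eq_fintype_card, hGL]
    rw [e1, e2]
    have h1 : 1 ≤ p ^ 2 := Nat.one_le_pow _ _ (by omega)
    have h2 : p ≤ p ^ 2 := by nlinarith
    push_cast [Nat.cast_sub h1, Nat.cast_sub h2]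
    ring
  -- membership in S
  have hmem : ∀ y : M, y ∈ S ↔ y 0 0 = 0 ∧ y 1 0 = 0 := fun y => mem_span_e22 y
  -- cardinality of S
  haveI : Fintype ↥S := Fintype.ofFinite _
  have eS : ↥S ≃ (ZMod p × ZMod p) :=
    { toFun := fun y => (y.1 0 1, y.1 1 1)
      invFun := fun v => ⟨!![0, v.1; 0, v.2], (hmem _).mpr ⟨by simp, by simp⟩⟩
      left_inv := by
        rintro ⟨y, hy⟩
        obtain ⟨h0, h1⟩ := (hmem y).mp hy
        apply Subtype.ext
        ext i j
        fin_cases i <;> fin_cases j <;> simp [h0, h1]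
      right_inv := fun v => by simp }
  have hcardS : (Nat.card ↥S : ℝ) = (p : ℝ) ^ 2 := by
    rw [Nat.card_congr eS]
    simp [Nat.card_eq_fintype_card, ZMod.card]
    ring
  -- sum of ranks over S
  have hsumS : (∑ᶠ y : ↥S, (((y : M).rank : ℝ))) = (p : ℝ) ^ 2 - 1 := by
    rw [finsum_eq_sum_of_fintype]
    have hr : ∀ y : ↥S, (((y : M).rank : ℝ)) = if y = 0 then (0:ℝ) else 1 := by
      intro y
      obtain ⟨h0, h1⟩ := (hmem y.1).mp y.2
      have hd0 : (y : M).det = 0 := by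
        rw [Matrix.det_fin_two, h0, h1]
        ring
      rw [hrank]
      have hcoe : ((y : M) = 0) ↔ y = 0 := ZeroMemClass.coe_eq_zero
      simp [hd0, hcoe, isUnit_zero_iff]
    rw [Finset.sum_congr rfl fun y _ => hr y]
    have : ∀ y : ↥S, (if y = 0 then (0:ℝ) else 1) = 1 - (if y = 0 then (1:ℝ) else 0) := by
      intro y; split_ifs <;> ring
    rw [Finset.sum_congr rfl fun y _ => this y, Finset.sum_sub_distrib,
      Finset.sum_const, Finset.sum_ite_eq' Finset.univ (0 : ↥S) (fun _ => (1:ℝ))]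
    simp only [Finset.mem_univ, if_true, nsmul_eq_mul, mul_one]
    rw [Finset.card_univ, ← Nat.card_eq_fintype_card, hcardS]
  -- the inequality of averages
  have hne : ((p : ℝ) ^ 2 - 1) / (p : ℝ) ^ 2 ≠
      (2 * (p : ℝ) ^ 4 - (p : ℝ) ^ 3 - (p : ℝ) ^ 2 + (p : ℝ) - 1) / (p : ℝ) ^ 4 := by
    intro h
    rw [div_eq_div_iff (by positivity) (by positivity)] at h
    nlinarith [sq_nonneg ((p:ℝ) - 1), pow_pos (show (0:ℝ) < p by linarith) 2,
      pow_pos (show (0:ℝ) < p by linarith) 5]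
  refine ⟨?_, ?_, ?_, hne⟩
  · rintro ⟨Γ, hΓ⟩
    have haz : a ≠ 0 := by
      intro h
      have := congrFun (congrFun h 1) 1
      simp [ha, Matrix.zero_apply] at this
      exact one_ne_zero (this.trans rfl)
    have h1 := hΓ a haz
    rw [hsumS, hcardS] at h1
    have htop : Submodule.span M {(1 : M)} = ⊤ := by
      rw [Submodule.eq_top_iff']
      intro x
      exact Submodule.mem_span_singleton.mpr ⟨x, by simp⟩
    have h2 := hΓ 1 one_ne_zero
    rw [htop] at h2
    haveI : Fintype ↥(⊤ : Submodule M M) := Fintype.ofFinite _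
    have hTsum : (∑ᶠ y : ↥(⊤ : Submodule M M), (((y : M).rank : ℝ))) =
        ∑ᶠ A : M, ((A.rank : ℝ)) := by
      rw [finsum_eq_sum_of_fintype, finsum_eq_sum_of_fintype]
      exact Fintype.sum_equiv Submodule.topEquiv.toEquiv _ _ (fun y => rfl)
    have hTcard : (Nat.card ↥(⊤ : Submodule M M) : ℝ) = (p : ℝ) ^ 4 := by
      rw [Nat.card_congr Submodule.topEquiv.toEquiv]
      exact hcardM
    rw [hTsum, hsumAll, hTcard] at h2
    apply hne
    have hΓ1 : Γ = ((p : ℝ) ^ 2 - 1) / (p : ℝ) ^ 2 := by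
      field_simp
      linarith
    have hΓ2 : Γ = (2 * (p : ℝ) ^ 4 - (p : ℝ) ^ 3 - (p : ℝ) ^ 2 + (p : ℝ) - 1) / (p : ℝ) ^ 4 := by
      field_simp
      linarith
    rw [← hΓ1, ← hΓ2]
  · rw [hsumS, hcardS]
  · rw [hsumAll, hcardM]
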